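/- arXiv:2501.17795 — 2 statements merged into one kernel-verified Lean document; each statement's English description precedes it below -/
import Mathlib

section
/- Let C, r > 0 and let X and Y be ℝ^d-valued random variables defined on the same probability space with |X − Y| < Cr almost surely. Let U and V be independent random variables, each uniformly distributed on [−r/2, r/2]^d and independent of (X, Y), and assume the differential entropies H(X + U) and H(Y + V) are finite. Then |H^ξ(X; r) − H^ξ(Y; r)| ≤ d log(2C + 4), i.e. |H(X + U) − H(Y + V)| ≤ d log(2C + 4). -/
open MeasureTheory ProbabilityTheory
open scoped ENNReal

/-- The differential entropy `H(η) = −∫ f log f` of a measure `η` on `ℝ^d`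
with Lebesgue density `f = dη/d(vol)`. -/
noncomputable def diffEntropy {d : ℕ} (η : Measure (EuclideanSpace ℝ (Fin d))) : ℝ :=
  -∫ x, ((η.rnDeriv volume x).toReal * Real.log (η.rnDeriv volume x).toReal)

/-- The uniform probability measure on the cube `[−r/2, r/2]^d`. -/
noncomputable def cubeUniform (d : ℕ) (r : ℝ) : Measure (EuclideanSpace ℝ (Fin d)) :=
  (volume {x : EuclideanSpace ℝ (Fin d) | ∀ i, |x i| ≤ r / 2})⁻¹ •
    volume.restrict {x : EuclideanSpace ℝ (Fin d) | ∀ i, |x i| ≤ r / 2}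

/-!
Let `h = r⁻ᵈ 1_Q` be the density of the uniform law on the cube `Q = [-r/2, r/2]ᵈ`, and `f`, `g`
the densities of `X + U` and `Y + V`. The function `p (z, w) = E[h (z - X) h (w - Y)]` is a joint
density with marginals `f` and `g`, and `rᵈ p ≤ f`, `rᵈ p ≤ g` because `h ≤ r⁻ᵈ`. As
`‖X - Y‖ < C r`, `p (z, w) = 0` unless `|zᵢ - wᵢ| ≤ (C + 1) r` for all `i`, so every section of
the support of `p` has volume at most `V = (2 (C + 1) r)ᵈ`. Hence
`∫ g log g - ∫ f log f = ∫ p log (g(w) / f(z)) ≤ ∫ p log (g(w) / (rᵈ p)) ≤ log (V / rᵈ)`,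
the last step being Gibbs' inequality `log x ≤ x - 1` against `1_{p ≠ 0} g(w) / V`, whose total
mass is at most `1`. Exchanging `f` and `g` gives `|H(X + U) - H(Y + V)| ≤ d log (2C + 2)`.
-/

open Real in
lemma mul_log_sub_mul_log_le {p f g κ V : ℝ} (hκ : 0 < κ) (hV : 0 < V) (hp : 0 ≤ p)
    (hpf : κ * p ≤ f) (hpg : κ * p ≤ g) :
    p * log g - p * log f ≤ g / V - p + p * log (V / κ) := by
  rcases hp.eq_or_lt with rfl | hp
  · simpa using div_nonneg (by simpa using hpg) hV.le
  have hg : 0 < g := (mul_pos hκ hp).trans_le hpg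
  have hf : log κ + log p ≤ log f := by
    rw [← log_mul hκ.ne' hp.ne']; exact log_le_log (mul_pos hκ hp) hpf
  have hgibbs : log g - log V - log p ≤ g / (V * p) - 1 := by
    rw [sub_sub, ← log_mul hV.ne' hp.ne', ← log_div hg.ne' (mul_pos hV hp).ne']
    exact log_le_sub_one_of_pos (by positivity)
  have hgV : p * (g / (V * p)) = g / V := by field_simp
  rw [log_div hV.ne' hκ.ne']
  nlinarith [mul_le_mul_of_nonneg_left hf hp.le, mul_le_mul_of_nonneg_left hgibbs hp.le]

open Real in
lemma toReal_mul_log_sub_le {κ V : ℝ} (hκ : 0 < κ) (hV : 0 < V) {p f g : ℝ≥0∞} (hf : f ≠ ∞)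
    (hg : g ≠ ∞) (hpf : ENNReal.ofReal κ * p ≤ f) (hpg : ENNReal.ofReal κ * p ≤ g) :
    p.toReal * log g.toReal - p.toReal * log f.toReal
      ≤ g.toReal / V - p.toReal + p.toReal * log (V / κ) := by
  have hκp : ∀ {x}, ENNReal.ofReal κ * p ≤ x → x ≠ ∞ → κ * p.toReal ≤ x.toReal := fun hle hx => by
    simpa [ENNReal.toReal_mul, hκ.le] using ENNReal.toReal_mono hx hle
  exact mul_log_sub_mul_log_le hκ hV ENNReal.toReal_nonneg (hκp hpf hf) (hκp hpg hg)

section Coupling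

variable {α β : Type*} [MeasurableSpace α] [MeasurableSpace β] {μ : Measure α} {ν : Measure β}
  [SFinite μ] [SFinite ν] {p : α × β → ℝ≥0∞} {f : α → ℝ≥0∞} {g : β → ℝ≥0∞}

lemma integrable_toReal_mul_comp_snd (hp : Measurable p) (hmarg : ∀ w, ∫⁻ z, p (z, w) ∂μ = g w)
    (hg : ∀ w, g w ≠ ∞) {φ : β → ℝ} (hφ : Measurable φ)
    (hint : Integrable (fun w => (g w).toReal * φ w) ν) :
    Integrable (fun q => (p q).toReal * φ q.2) (μ.prod ν) := by
  refine ⟨by fun_prop, ?_⟩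
  have hg' : ∀ w, ‖(g w).toReal * φ w‖ₑ = g w * ‖φ w‖ₑ := fun w => by
    rw [enorm_mul, Real.enorm_of_nonneg ENNReal.toReal_nonneg, ENNReal.ofReal_toReal (hg w)]
  calc ∫⁻ q, ‖(p q).toReal * φ q.2‖ₑ ∂(μ.prod ν)
      ≤ ∫⁻ q, p q * ‖φ q.2‖ₑ ∂(μ.prod ν) := lintegral_mono fun q => by
        rw [enorm_mul, Real.enorm_of_nonneg ENNReal.toReal_nonneg]
        exact mul_le_mul_left ENNReal.ofReal_toReal_le _
    _ = ∫⁻ w, ‖(g w).toReal * φ w‖ₑ ∂ν := by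
        rw [lintegral_prod_symm _ (by fun_prop)]
        refine lintegral_congr fun w => ?_
        simp only
        rw [lintegral_mul_const _ (by fun_prop), hmarg, hg']
    _ < ∞ := hint.2

lemma integral_toReal_mul_comp_snd (hp : Measurable p) (hmarg : ∀ w, ∫⁻ z, p (z, w) ∂μ = g w)
    (hg : ∀ w, g w ≠ ∞) {φ : β → ℝ} (hφ : Measurable φ)
    (hint : Integrable (fun w => (g w).toReal * φ w) ν) :
    ∫ q, (p q).toReal * φ q.2 ∂(μ.prod ν) = ∫ w, (g w).toReal * φ w ∂ν := by
  rw [integral_prod_symm _ (integrable_toReal_mul_comp_snd hp hmarg hg hφ hint)]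
  refine integral_congr_ae (Filter.Eventually.of_forall fun w => ?_)
  have hpw : Measurable fun z => p (z, w) := by fun_prop
  simp only
  rw [integral_mul_const, integral_toReal hpw.aemeasurable
    (ae_lt_top hpw (by rw [hmarg]; exact hg w)), hmarg]

lemma integrable_toReal_mul_comp_fst (hp : Measurable p) (hmarg : ∀ z, ∫⁻ w, p (z, w) ∂ν = f z)
    (hf : ∀ z, f z ≠ ∞) {φ : α → ℝ} (hφ : Measurable φ)
    (hint : Integrable (fun z => (f z).toReal * φ z) μ) :
    Integrable (fun q => (p q).toReal * φ q.1) (μ.prod ν) :=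
  (integrable_toReal_mul_comp_snd (p := p ∘ Prod.swap) (hp.comp measurable_swap) hmarg hf hφ
    hint).swap

lemma integral_toReal_mul_comp_fst (hp : Measurable p) (hmarg : ∀ z, ∫⁻ w, p (z, w) ∂ν = f z)
    (hf : ∀ z, f z ≠ ∞) {φ : α → ℝ} (hφ : Measurable φ)
    (hint : Integrable (fun z => (f z).toReal * φ z) μ) :
    ∫ q, (p q).toReal * φ q.1 ∂(μ.prod ν) = ∫ z, (f z).toReal * φ z ∂μ := by
  rw [← integral_prod_swap]
  exact integral_toReal_mul_comp_snd (p := p ∘ Prod.swap) (hp.comp measurable_swap) hmarg hf hφ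
    hint

lemma lintegral_indicator_support_div_le (hp : Measurable p) (hg : Measurable g) {V : ℝ≥0∞}
    (hV₀ : V ≠ 0) (hV : V ≠ ∞) (hsupp : ∀ w, μ {z | p (z, w) ≠ 0} ≤ V) :
    ∫⁻ q, {q | p q ≠ 0}.indicator (fun q => g q.2 / V) q ∂(μ.prod ν) ≤ ∫⁻ w, g w ∂ν := by
  have hT : Measurable ({q | p q ≠ 0}.indicator fun q => g q.2 / V) :=
    ((hg.comp measurable_snd).div_const _).indicator
      (measurableSet_eq_fun hp measurable_const).compl
  rw [lintegral_prod_symm _ hT.aemeasurable]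
  refine lintegral_mono fun w => ?_
  have hsection : (fun z => {q | p q ≠ 0}.indicator (fun q => g q.2 / V) (z, w)) =
      {z | p (z, w) ≠ 0}.indicator fun _ => g w / V := by
    ext z; by_cases hz : p (z, w) = 0 <;> simp [hz]
  have hSw : MeasurableSet {z | p (z, w) ≠ 0} :=
    (measurableSet_eq_fun (hp.comp measurable_prodMk_right) measurable_const).compl
  rw [hsection, lintegral_indicator_const hSw]
  calc g w / V * μ {z | p (z, w) ≠ 0} ≤ g w / V * V := mul_le_mul_right (hsupp w) _
    _ = g w := ENNReal.div_mul_cancel hV₀ hV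

open Real in
lemma integral_mul_log_sub_le_of_coupling (hf : Measurable f) (hg : Measurable g)
    (hp : Measurable p) (hf_ne_top : ∀ z, f z ≠ ∞) (hg_ne_top : ∀ w, g w ≠ ∞)
    (hmarg_fst : ∀ z, ∫⁻ w, p (z, w) ∂ν = f z) (hmarg_snd : ∀ w, ∫⁻ z, p (z, w) ∂μ = g w)
    (hg_one : ∫⁻ w, g w ∂ν = 1) {κ V : ℝ} (hκ : 0 < κ) (hV : 0 < V)
    (hpf : ∀ q, ENNReal.ofReal κ * p q ≤ f q.1) (hpg : ∀ q, ENNReal.ofReal κ * p q ≤ g q.2)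
    (hsupp : ∀ w, μ {z | p (z, w) ≠ 0} ≤ ENNReal.ofReal V)
    (hintf : Integrable (fun z => (f z).toReal * log (f z).toReal) μ)
    (hintg : Integrable (fun w => (g w).toReal * log (g w).toReal) ν) :
    ∫ w, (g w).toReal * log (g w).toReal ∂ν - ∫ z, (f z).toReal * log (f z).toReal ∂μ
      ≤ log (V / κ) := by
  have hp_one : ∫⁻ q, p q ∂(μ.prod ν) = 1 := by
    simp only [lintegral_prod_symm _ hp.aemeasurable, hmarg_snd, hg_one]
  have Ip : Integrable (fun q => (p q).toReal) (μ.prod ν) :=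
    integrable_toReal_of_lintegral_ne_top hp.aemeasurable (by simp [hp_one])
  have hIp : ∫ q, (p q).toReal ∂(μ.prod ν) = 1 := by
    rw [integral_toReal hp.aemeasurable (ae_lt_top hp (by simp [hp_one])), hp_one,
      ENNReal.toReal_one]
  set T : α × β → ℝ≥0∞ := {q | p q ≠ 0}.indicator fun q => g q.2 / ENNReal.ofReal V
  have hT : Measurable T := ((hg.comp measurable_snd).div_const _).indicator
    (measurableSet_eq_fun hp measurable_const).compl
  have hT_le : ∫⁻ q, T q ∂(μ.prod ν) ≤ 1 := hg_one ▸
    lintegral_indicator_support_div_le hp hg (by simpa using hV) ENNReal.ofReal_ne_top hsupp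
  have hT_ne_top : ∫⁻ q, T q ∂(μ.prod ν) ≠ ∞ := ne_top_of_le_ne_top ENNReal.one_ne_top hT_le
  have IT : Integrable (fun q => (T q).toReal) (μ.prod ν) :=
    integrable_toReal_of_lintegral_ne_top hT.aemeasurable hT_ne_top
  have hIT : ∫ q, (T q).toReal ∂(μ.prod ν) ≤ 1 := by
    rw [integral_toReal hT.aemeasurable (ae_lt_top hT hT_ne_top)]
    exact ENNReal.toReal_le_of_le_ofReal zero_le_one (by simpa using hT_le)
  have hlogf : Measurable fun z => log (f z).toReal := by fun_prop
  have hlogg : Measurable fun w => log (g w).toReal := by fun_prop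
  have Ig := integrable_toReal_mul_comp_snd hp hmarg_snd hg_ne_top hlogg hintg
  have If := integrable_toReal_mul_comp_fst hp hmarg_fst hf_ne_top hlogf hintf
  have hpointwise : ∀ q, (p q).toReal * log (g q.2).toReal - (p q).toReal * log (f q.1).toReal
      ≤ (T q).toReal - (p q).toReal + (p q).toReal * log (V / κ) := fun q => by
    by_cases hq : p q = 0
    · simp [hq]
    rw [show (T q).toReal = (g q.2).toReal / V by simp [T, hq, ENNReal.toReal_div, hV.le]]
    exact toReal_mul_log_sub_le hκ hV (hf_ne_top _) (hg_ne_top _) (hpf q) (hpg q)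
  calc ∫ w, (g w).toReal * log (g w).toReal ∂ν - ∫ z, (f z).toReal * log (f z).toReal ∂μ
      = ∫ q, ((p q).toReal * log (g q.2).toReal - (p q).toReal * log (f q.1).toReal)
          ∂(μ.prod ν) := by
        rw [integral_sub Ig If, integral_toReal_mul_comp_snd hp hmarg_snd hg_ne_top hlogg hintg,
          integral_toReal_mul_comp_fst hp hmarg_fst hf_ne_top hlogf hintf]
    _ ≤ ∫ q, ((T q).toReal - (p q).toReal + (p q).toReal * log (V / κ)) ∂(μ.prod ν) :=
        integral_mono (Ig.sub If) ((IT.sub Ip).add (Ip.mul_const _)) hpointwise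
    _ = ∫ q, (T q).toReal ∂(μ.prod ν) - 1 + log (V / κ) := by
        rw [integral_add (f := fun q => (T q).toReal - (p q).toReal) (IT.sub Ip)
          (Ip.mul_const _), integral_sub IT Ip, integral_mul_const, hIp, one_mul]
    _ ≤ log (V / κ) := by linarith

open Real in
lemma abs_integral_mul_log_sub_le_of_coupling (hf : Measurable f) (hg : Measurable g)
    (hp : Measurable p) (hf_ne_top : ∀ z, f z ≠ ∞) (hg_ne_top : ∀ w, g w ≠ ∞)
    (hmarg_fst : ∀ z, ∫⁻ w, p (z, w) ∂ν = f z) (hmarg_snd : ∀ w, ∫⁻ z, p (z, w) ∂μ = g w)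
    (hg_one : ∫⁻ w, g w ∂ν = 1) {κ V : ℝ} (hκ : 0 < κ) (hV : 0 < V)
    (hpf : ∀ q, ENNReal.ofReal κ * p q ≤ f q.1) (hpg : ∀ q, ENNReal.ofReal κ * p q ≤ g q.2)
    (hsupp_fst : ∀ w, μ {z | p (z, w) ≠ 0} ≤ ENNReal.ofReal V)
    (hsupp_snd : ∀ z, ν {w | p (z, w) ≠ 0} ≤ ENNReal.ofReal V)
    (hintf : Integrable (fun z => (f z).toReal * log (f z).toReal) μ)
    (hintg : Integrable (fun w => (g w).toReal * log (g w).toReal) ν) :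
    |∫ w, (g w).toReal * log (g w).toReal ∂ν - ∫ z, (f z).toReal * log (f z).toReal ∂μ|
      ≤ log (V / κ) := by
  have hf_one : ∫⁻ z, f z ∂μ = 1 := by
    simp only [← hg_one, ← hmarg_fst, ← hmarg_snd]
    exact lintegral_lintegral_swap hp.aemeasurable
  rw [abs_le]
  refine ⟨?_, integral_mul_log_sub_le_of_coupling hf hg hp hf_ne_top hg_ne_top hmarg_fst
    hmarg_snd hg_one hκ hV hpf hpg hsupp_fst hintf hintg⟩
  have := integral_mul_log_sub_le_of_coupling (p := p ∘ Prod.swap) hg hf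
    (hp.comp measurable_swap) hg_ne_top hf_ne_top hmarg_snd hmarg_fst hf_one hκ hV
    (fun q => hpg q.swap) (fun q => hpf q.swap) hsupp_snd hintg hintf
  linarith

end Coupling

section Convolution

variable {G : Type*} [AddCommGroup G] [MeasurableSpace G] {h : G → ℝ≥0∞}

noncomputable def convDensity (ρ : Measure G) (h : G → ℝ≥0∞) (z : G) : ℝ≥0∞ :=
  ∫⁻ x, h (z - x) ∂ρ

noncomputable def couplingDensity (ν : Measure (G × G)) (h : G → ℝ≥0∞) : G × G → ℝ≥0∞ :=
  convDensity ν fun y => h y.1 * h y.2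

lemma exists_of_convDensity_ne_zero {ρ : Measure G} {R : G → Prop} (hR : ∀ᵐ x ∂ρ, R x) {z : G}
    (hz : convDensity ρ h z ≠ 0) : ∃ x, R x ∧ h (z - x) ≠ 0 := by
  by_contra! hcon
  exact hz (by rw [convDensity, lintegral_congr_ae (hR.mono hcon), lintegral_zero])

lemma convDensity_le {M : ℝ≥0∞} (hM : ∀ x, h x ≤ M) (ρ : Measure G) [IsProbabilityMeasure ρ]
    (z : G) : convDensity ρ h z ≤ M :=
  calc convDensity ρ h z ≤ ∫⁻ _, M ∂ρ := lintegral_mono fun x => hM _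
    _ = M := by rw [lintegral_const, measure_univ, mul_one]

variable [MeasurableAdd₂ G] [MeasurableNeg G] {m : Measure G} [SFinite m] [m.IsAddRightInvariant]

lemma measurable_convDensity (ρ : Measure G) [SFinite ρ] (hh : Measurable h) :
    Measurable (convDensity ρ h) :=
  Measurable.lintegral_prod_right' (f := fun q : G × G => h (q.1 - q.2)) (by fun_prop)

lemma lintegral_convDensity (ρ : Measure G) [SFinite ρ] (hh : Measurable h) :
    ∫⁻ z, convDensity ρ h z ∂m = ρ Set.univ * ∫⁻ x, h x ∂m := by
  simp only [convDensity]
  rw [lintegral_lintegral_swap (by fun_prop)]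
  simp only [lintegral_sub_right_eq_self h, lintegral_const, mul_comm]

lemma conv_withDensity (ρ : Measure G) [SFinite ρ] (hh : Measurable h) :
    ρ ∗ m.withDensity h = m.withDensity (convDensity ρ h) := by
  ext s hs
  have hind : Measurable (s.indicator (1 : G → ℝ≥0∞)) := measurable_one.indicator hs
  rw [← lintegral_indicator_one hs, Measure.lintegral_conv hind, withDensity_apply _ hs,
    ← lintegral_indicator hs]
  calc ∫⁻ x, ∫⁻ y, s.indicator 1 (x + y) ∂m.withDensity h ∂ρ
      = ∫⁻ x, ∫⁻ z, h (z - x) * s.indicator 1 z ∂m ∂ρ := lintegral_congr fun x => by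
        rw [lintegral_withDensity_eq_lintegral_mul _ hh (by fun_prop),
          ← lintegral_add_right_eq_self (fun z => h (z - x) * s.indicator 1 z) x]
        simp [add_comm]
    _ = ∫⁻ z, s.indicator (convDensity ρ h) z ∂m := by
        rw [lintegral_lintegral_swap (by fun_prop)]
        refine lintegral_congr fun z => ?_
        by_cases hz : z ∈ s <;> simp [hz, convDensity]

lemma couplingDensity_le_fst (ν : Measure (G × G)) {M : ℝ≥0∞} (hM : ∀ x, h x ≤ M)
    (hh : Measurable h) (q : G × G) :
    couplingDensity ν h q ≤ M * convDensity (ν.map Prod.fst) h q.1 :=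
  calc couplingDensity ν h q ≤ ∫⁻ x, h (q.1 - x.1) * M ∂ν :=
        lintegral_mono fun x => mul_le_mul_right (hM _) _
    _ = M * convDensity (ν.map Prod.fst) h q.1 := by
        rw [lintegral_mul_const _ (by fun_prop), convDensity,
          lintegral_map (by fun_prop) measurable_fst, mul_comm]

lemma couplingDensity_le_snd (ν : Measure (G × G)) {M : ℝ≥0∞} (hM : ∀ x, h x ≤ M)
    (hh : Measurable h) (q : G × G) :
    couplingDensity ν h q ≤ M * convDensity (ν.map Prod.snd) h q.2 :=
  calc couplingDensity ν h q ≤ ∫⁻ x, M * h (q.2 - x.2) ∂ν :=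
        lintegral_mono fun x => mul_le_mul_left (hM _) _
    _ = M * convDensity (ν.map Prod.snd) h q.2 := by
        rw [lintegral_const_mul _ (by fun_prop), convDensity,
          lintegral_map (by fun_prop) measurable_snd]

variable (ν : Measure (G × G)) [SFinite ν]

lemma measurable_couplingDensity (hh : Measurable h) : Measurable (couplingDensity ν h) :=
  Measurable.lintegral_prod_right'
    (f := fun p : (G × G) × (G × G) => h (p.1.1 - p.2.1) * h (p.1.2 - p.2.2)) (by fun_prop)

lemma lintegral_couplingDensity_right (hh : Measurable h) (hh_one : ∫⁻ x, h x ∂m = 1) (z : G) :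
    ∫⁻ w, couplingDensity ν h (z, w) ∂m = convDensity (ν.map Prod.fst) h z := by
  simp only [couplingDensity, convDensity, Prod.fst_sub, Prod.snd_sub]
  rw [lintegral_lintegral_swap (by fun_prop), lintegral_map (by fun_prop) measurable_fst]
  refine lintegral_congr fun x => ?_
  rw [lintegral_const_mul _ (by fun_prop), lintegral_sub_right_eq_self h, hh_one, mul_one]

lemma lintegral_couplingDensity_left (hh : Measurable h) (hh_one : ∫⁻ x, h x ∂m = 1) (w : G) :
    ∫⁻ z, couplingDensity ν h (z, w) ∂m = convDensity (ν.map Prod.snd) h w := by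
  simp only [couplingDensity, convDensity, Prod.fst_sub, Prod.snd_sub]
  rw [lintegral_lintegral_swap (by fun_prop), lintegral_map (by fun_prop) measurable_snd]
  refine lintegral_congr fun x => ?_
  rw [lintegral_mul_const _ (by fun_prop), lintegral_sub_right_eq_self h, hh_one, one_mul]

end Convolution

lemma rnDeriv_withDensity_mul_log_ae_eq {α : Type*} [MeasurableSpace α] (μ : Measure α)
    [SigmaFinite μ] {f : α → ℝ≥0∞} (hf : Measurable f) :
    (fun x => ((μ.withDensity f).rnDeriv μ x).toReal *
        Real.log ((μ.withDensity f).rnDeriv μ x).toReal) =ᵐ[μ]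
      fun x => (f x).toReal * Real.log (f x).toReal :=
  (Measure.rnDeriv_withDensity μ hf).mono fun x hx => by simp only [hx]

section Cube

variable {d : ℕ}

local notation "E" => EuclideanSpace ℝ (Fin d)

lemma diffEntropy_withDensity {f : E → ℝ≥0∞} (hf : Measurable f) :
    diffEntropy (volume.withDensity f) = -∫ x, (f x).toReal * Real.log (f x).toReal := by
  rw [diffEntropy, integral_congr_ae (rnDeriv_withDensity_mul_log_ae_eq volume hf)]

lemma measurableSet_cube (s : ℝ) : MeasurableSet {x : E | ∀ i, |x i| ≤ s} := by
  simp only [Set.ofPred_forall]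
  exact MeasurableSet.iInter fun i => measurableSet_le (by fun_prop) measurable_const

lemma volume_cube (s : ℝ) : volume {x : E | ∀ i, |x i| ≤ s} = ENNReal.ofReal (2 * s) ^ d := by
  have hcube : {x : E | ∀ i, |x i| ≤ s} =
      (MeasurableEquiv.toLp 2 (Fin d → ℝ)).symm ⁻¹' Set.univ.pi fun _ => Set.Icc (-s) s := by
    ext x
    simp only [Set.mem_ofPred_eq, Set.mem_preimage, Set.mem_univ_pi, Set.mem_Icc, abs_le]
    rfl
  rw [hcube, (EuclideanSpace.volume_preserving_symm_measurableEquiv_toLp (Fin d)).measure_preimage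
    (MeasurableSet.univ_pi fun _ => measurableSet_Icc).nullMeasurableSet, volume_pi_pi]
  simp [Real.volume_Icc, two_mul]

lemma volume_cube_sub (w : E) (s : ℝ) :
    volume {z : E | ∀ i, |z i - w i| ≤ s} = ENNReal.ofReal (2 * s) ^ d := by
  have hcube : {z : E | ∀ i, |z i - w i| ≤ s} = (· + -w) ⁻¹' {x | ∀ i, |x i| ≤ s} := by
    ext z
    simp [sub_eq_add_neg]
  rw [hcube, measure_preimage_add_right, volume_cube]

variable (d) in
noncomputable def cubeDensity (r : ℝ) : E → ℝ≥0∞ :=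
  {x | ∀ i, |x i| ≤ r / 2}.indicator fun _ => (ENNReal.ofReal r ^ d)⁻¹

lemma measurable_cubeDensity (r : ℝ) : Measurable (cubeDensity d r) :=
  measurable_const.indicator (measurableSet_cube _)

lemma cubeDensity_le (r : ℝ) (x : E) : cubeDensity d r x ≤ (ENNReal.ofReal r ^ d)⁻¹ :=
  Set.indicator_le_self' (fun _ _ => bot_le) x

lemma cubeUniform_eq_withDensity (r : ℝ) :
    cubeUniform d r = volume.withDensity (cubeDensity d r) := by
  rw [cubeDensity, withDensity_indicator (measurableSet_cube _), withDensity_const, cubeUniform,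
    volume_cube, mul_div_cancel₀ _ two_ne_zero]

lemma lintegral_cubeDensity {r : ℝ} (hr : 0 < r) : ∫⁻ x, cubeDensity d r x = 1 := by
  rw [cubeDensity, lintegral_indicator_const (measurableSet_cube _), volume_cube,
    mul_div_cancel₀ _ two_ne_zero, ENNReal.inv_mul_cancel (by simp [hr]) (by simp)]

lemma abs_sub_le_of_couplingDensity_cube_ne_zero {ν : Measure (E × E)} {C r : ℝ}
    (hclose : ∀ᵐ x ∂ν, ‖x.1 - x.2‖ < C * r) {q : E × E}
    (hq : couplingDensity ν (cubeDensity d r) q ≠ 0) (i : Fin d) :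
    |q.1 i - q.2 i| ≤ (C + 1) * r := by
  obtain ⟨x, hx, hne⟩ := exists_of_convDensity_ne_zero hclose hq
  have h₁ : |q.1 i - x.1 i| ≤ r / 2 := by
    simpa using Set.mem_of_indicator_ne_zero (left_ne_zero_of_mul hne) i
  have h₂ : |q.2 i - x.2 i| ≤ r / 2 := by
    simpa using Set.mem_of_indicator_ne_zero (right_ne_zero_of_mul hne) i
  have h₃ : |x.1 i - x.2 i| ≤ C * r := by
    simpa using (PiLp.norm_apply_le (x.1 - x.2) i).trans hx.le
  rw [abs_le] at h₁ h₂ h₃ ⊢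
  constructor <;> linarith

open Real in
theorem abs_diffEntropy_conv_cubeUniform_sub_le {ν : Measure (E × E)} [IsProbabilityMeasure ν]
    {C r : ℝ} (hC : 0 ≤ C) (hr : 0 < r) (hclose : ∀ᵐ x ∂ν, ‖x.1 - x.2‖ < C * r)
    (hint₁ : Integrable fun x => ((ν.map Prod.fst ∗ cubeUniform d r).rnDeriv volume x).toReal *
      log ((ν.map Prod.fst ∗ cubeUniform d r).rnDeriv volume x).toReal)
    (hint₂ : Integrable fun x => ((ν.map Prod.snd ∗ cubeUniform d r).rnDeriv volume x).toReal *
      log ((ν.map Prod.snd ∗ cubeUniform d r).rnDeriv volume x).toReal) :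
    |diffEntropy (ν.map Prod.fst ∗ cubeUniform d r) -
        diffEntropy (ν.map Prod.snd ∗ cubeUniform d r)| ≤ d * log (2 * C + 2) := by
  have : IsProbabilityMeasure (ν.map Prod.fst) := Measure.isProbabilityMeasure_map (by fun_prop)
  have : IsProbabilityMeasure (ν.map Prod.snd) := Measure.isProbabilityMeasure_map (by fun_prop)
  have hh := measurable_cubeDensity (d := d) r
  have hh_one := lintegral_cubeDensity (d := d) hr
  have hlaw : ∀ (ρ : Measure E) [SFinite ρ],
      ρ ∗ cubeUniform d r = volume.withDensity (convDensity ρ (cubeDensity d r)) :=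
    fun ρ => by rw [cubeUniform_eq_withDensity]; exact conv_withDensity ρ hh
  rw [hlaw] at hint₁ hint₂ ⊢
  rw [hlaw, diffEntropy_withDensity (measurable_convDensity _ hh),
    diffEntropy_withDensity (measurable_convDensity _ hh), neg_sub_neg]
  have hdom : ∀ {a b : ℝ≥0∞}, a ≤ (ENNReal.ofReal r ^ d)⁻¹ * b → ENNReal.ofReal (r ^ d) * a ≤ b :=
    fun hab => (ENNReal.ofReal_pow hr.le d).symm ▸ (mul_le_mul_right hab _).trans_eq
      (ENNReal.mul_inv_cancel_left (by simp [hr]) (by simp))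
  have hvol : ENNReal.ofReal (2 * ((C + 1) * r)) ^ d = ENNReal.ofReal ((2 * ((C + 1) * r)) ^ d) :=
    (ENNReal.ofReal_pow (by positivity) d).symm
  calc _ ≤ log ((2 * ((C + 1) * r)) ^ d / r ^ d) :=
        abs_integral_mul_log_sub_le_of_coupling (p := couplingDensity ν (cubeDensity d r))
          (measurable_convDensity _ hh) (measurable_convDensity _ hh)
          (measurable_couplingDensity ν hh)
          (fun z => ne_top_of_le_ne_top (by simp [hr]) (convDensity_le (cubeDensity_le r) _ z))
          (fun w => ne_top_of_le_ne_top (by simp [hr]) (convDensity_le (cubeDensity_le r) _ w))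
          (lintegral_couplingDensity_right ν hh hh_one)
          (lintegral_couplingDensity_left ν hh hh_one)
          (by rw [lintegral_convDensity _ hh, hh_one, measure_univ, one_mul])
          (by positivity) (by positivity)
          (fun q => hdom (couplingDensity_le_fst ν (cubeDensity_le r) hh q))
          (fun q => hdom (couplingDensity_le_snd ν (cubeDensity_le r) hh q))
          (fun w => hvol ▸ volume_cube_sub w _ ▸ measure_mono fun _ hz =>
            abs_sub_le_of_couplingDensity_cube_ne_zero hclose hz)
          (fun z => hvol ▸ volume_cube_sub z _ ▸ measure_mono fun _ hw i =>
            abs_sub_comm (z i) _ ▸ abs_sub_le_of_couplingDensity_cube_ne_zero hclose hw i)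
          (hint₁.congr (rnDeriv_withDensity_mul_log_ae_eq volume (measurable_convDensity _ hh)))
          (hint₂.congr (rnDeriv_withDensity_mul_log_ae_eq volume (measurable_convDensity _ hh)))
    _ = d * log (2 * C + 2) := by
        rw [← div_pow, log_pow]
        congr 2
        field_simp

end Cube

/-- if `|X − Y| < Cr` a.s. and `U, V` are independent uniform random
variables on `[−r/2, r/2]^d`, independent of `(X, Y)`, and the differential entropies
of `X + U` and `Y + V` are well defined, then
`|H(X + U) − H(Y + V)| ≤ d log(2C + 4)`. -/
theorem stmt_5 (d : ℕ) (C r : ℝ) (hC : 0 < C) (hr : 0 < r)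
    (Ω : Type) (_ : MeasurableSpace Ω) (μ : Measure Ω) (hμ : IsProbabilityMeasure μ)
    (X Y U V : Ω → EuclideanSpace ℝ (Fin d))
    (hX : Measurable X) (hY : Measurable Y) (hU : Measurable U) (hV : Measurable V)
    (hclose : ∀ᵐ ω ∂μ, ‖X ω - Y ω‖ < C * r)
    (hUlaw : μ.map U = cubeUniform d r) (hVlaw : μ.map V = cubeUniform d r)
    (hUXY : IndepFun U (fun ω => (X ω, Y ω)) μ)
    (hVXY : IndepFun V (fun ω => (X ω, Y ω)) μ)
    (hint1 : Integrable (fun x =>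
      (((μ.map (fun ω => X ω + U ω)).rnDeriv volume x).toReal *
        Real.log ((μ.map (fun ω => X ω + U ω)).rnDeriv volume x).toReal)) volume)
    (hint2 : Integrable (fun x =>
      (((μ.map (fun ω => Y ω + V ω)).rnDeriv volume x).toReal *
        Real.log ((μ.map (fun ω => Y ω + V ω)).rnDeriv volume x).toReal)) volume) :
    |diffEntropy (μ.map (fun ω => X ω + U ω)) - diffEntropy (μ.map (fun ω => Y ω + V ω))|
      ≤ d * Real.log (2 * C + 4) := by
  set ν := μ.map fun ω => (X ω, Y ω)
  have : IsProbabilityMeasure ν := Measure.isProbabilityMeasure_map (by fun_prop)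
  have hlawX : μ.map (fun ω => X ω + U ω) = ν.map Prod.fst ∗ cubeUniform d r := by
    rw [← hUlaw, Measure.map_map measurable_fst (by fun_prop)]
    exact (hUXY.symm.comp measurable_fst measurable_id).map_add_eq_map_conv_map
      (by fun_prop) (by fun_prop)
  have hlawY : μ.map (fun ω => Y ω + V ω) = ν.map Prod.snd ∗ cubeUniform d r := by
    rw [← hVlaw, Measure.map_map measurable_snd (by fun_prop)]
    exact (hVXY.symm.comp measurable_snd measurable_id).map_add_eq_map_conv_map
      (by fun_prop) (by fun_prop)
  have hcloseν : ∀ᵐ x ∂ν, ‖x.1 - x.2‖ < C * r :=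
    (ae_map_iff (by fun_prop) (measurableSet_lt (by fun_prop) measurable_const)).2 hclose
  rw [hlawX] at hint1 ⊢
  rw [hlawY] at hint2 ⊢
  calc _ ≤ d * Real.log (2 * C + 2) :=
        abs_diffEntropy_conv_cubeUniform_sub_le hC.le hr hcloseν hint1 hint2
    _ ≤ d * Real.log (2 * C + 4) := by gcongr; linarith
end

section
/- Suppose A ⊂ ℝ^d has finite Lebesgue measure m(A) and that g, h : A → [0, e^{−1}] are integrable functions. Let ε = ∫_A |g − h| dm and assume ε > 0. Then |∫_A (g log g − h log h) dm| ≤ −ε log ε + ε log m(A), where the convention 0·log 0 = 0 is used. -/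
/-!
Write `φ = negMulLog`, so `φ t = -t log t`. On `[0, e⁻¹]` the function `φ` is increasing, and
being concave with `φ 0 = 0` it is subadditive; together these give the pointwise bound
`|g log g - h log h| ≤ φ |g - h|`. Integrating the tangent line of `φ` at the mean value
`ε / m(A)` of `|g - h|` (Jensen's inequality for the concave `φ`) bounds `∫_A φ |g - h|` by
`m(A) φ (ε / m(A)) = -ε log ε + ε log m(A)`.
-/

open MeasureTheory Real

namespace Real

lemma negMulLog_add_le {x y : ℝ} (hx : 0 ≤ x) (hy : 0 ≤ y) :
    negMulLog (x + y) ≤ negMulLog x + negMulLog y := by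
  have mul_log_le {z : ℝ} (hz : 0 ≤ z) (hzxy : z ≤ x + y) : z * log z ≤ z * log (x + y) := by
    rcases hz.eq_or_lt with rfl | hz
    · simp
    · exact mul_le_mul_of_nonneg_left (log_le_log hz hzxy) hz.le
  simp only [negMulLog_eq_neg, add_mul]
  linarith [mul_log_le hx (le_add_of_nonneg_right hy), mul_log_le hy (le_add_of_nonneg_left hx)]

lemma negMulLog_le_tangent {s t : ℝ} (hs : 0 < s) (ht : 0 ≤ t) :
    negMulLog t ≤ negMulLog s + (-log s - 1) * (t - s) := by
  have hscale : negMulLog t = t / s * negMulLog s + s * negMulLog (t / s) := by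
    rw [← negMulLog_mul, mul_div_cancel₀ t hs.ne']
  have hunit := negMulLog_le_one_sub_self (div_nonneg ht hs.le)
  rw [hscale]
  calc t / s * negMulLog s + s * negMulLog (t / s)
      ≤ t / s * negMulLog s + s * (1 - t / s) := by gcongr
    _ = negMulLog s + (-log s - 1) * (t - s) := by
      simp only [negMulLog]
      field_simp
      ring

lemma abs_mul_log_sub_mul_log_le {a b : ℝ} (ha : a ∈ Set.Icc 0 (exp (-1)))
    (hb : b ∈ Set.Icc 0 (exp (-1))) :
    |a * log a - b * log b| ≤ negMulLog |a - b| := by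
  wlog hba : b ≤ a generalizing a b
  · rw [abs_sub_comm, abs_sub_comm a]
    exact this hb ha (le_of_not_ge hba)
  have hmono : a * log a ≤ b * log b := mul_log_strictAntiOn.antitoneOn hb ha hba
  have hsub := negMulLog_add_le hb.1 (sub_nonneg.2 hba)
  rw [add_sub_cancel] at hsub
  rw [abs_of_nonpos (sub_nonpos.2 hmono), abs_of_nonneg (sub_nonneg.2 hba)]
  simp only [negMulLog_eq_neg] at hsub ⊢
  linarith

end Real

theorem abs_integral_le_negMulLog_integral {α : Type*} [MeasurableSpace α] {μ : Measure α}
    [IsFiniteMeasure μ] {f u : α → ℝ} (hu : Integrable u μ) (hu0 : 0 ≤ᵐ[μ] u)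
    (hpos : 0 < ∫ x, u x ∂μ) (hf : ∀ᵐ x ∂μ, |f x| ≤ negMulLog (u x)) :
    |∫ x, f x ∂μ| ≤ negMulLog (∫ x, u x ∂μ) + (∫ x, u x ∂μ) * log (μ.real Set.univ) := by
  set ε := ∫ x, u x ∂μ
  set M := μ.real Set.univ
  have hμ : NeZero μ := ⟨by rintro rfl; simp [ε] at hpos⟩
  have hM : 0 < M := measureReal_univ_pos
  set s := ε / M
  have hs : 0 < s := div_pos hpos hM
  have hlin : Integrable (fun x ↦ (-log s - 1) * (u x - s)) μ :=
    (hu.sub (integrable_const s)).const_mul _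
  have htangent : Integrable (fun x ↦ negMulLog s + (-log s - 1) * (u x - s)) μ :=
    (integrable_const _).add hlin
  calc |∫ x, f x ∂μ|
      ≤ ∫ x, (negMulLog s + (-log s - 1) * (u x - s)) ∂μ := by
        rw [← Real.norm_eq_abs]
        refine norm_integral_le_of_norm_le htangent ?_
        filter_upwards [hf, hu0] with x hfx hux
        exact hfx.trans (negMulLog_le_tangent hs hux)
    _ = M * negMulLog s + (-log s - 1) * (ε - M * s) := by
        rw [integral_add (integrable_const _) hlin,
          integral_const, integral_const_mul, integral_sub hu (integrable_const s),
          integral_const, smul_eq_mul, smul_eq_mul]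
    _ = negMulLog ε + ε * log M := by
        have hMs : M * s = ε := mul_div_cancel₀ ε hM.ne'
        rw [hMs, negMulLog, negMulLog, log_div hpos.ne' hM.ne', ← hMs]
        ring

theorem stmt_8_general (d : ℕ) (A : Set (EuclideanSpace ℝ (Fin d)))
    (hA : MeasurableSet A) (hAfin : volume A ≠ ⊤)
    (g h : EuclideanSpace ℝ (Fin d) → ℝ)
    (hgint : IntegrableOn g A volume) (hhint : IntegrableOn h A volume)
    (hgb : ∀ x ∈ A, g x ∈ Set.Icc (0 : ℝ) (Real.exp (-1)))
    (hhb : ∀ x ∈ A, h x ∈ Set.Icc (0 : ℝ) (Real.exp (-1)))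
    (ε : ℝ) (hε : ε = ∫ x in A, |g x - h x|) (hεpos : 0 < ε) :
    |∫ x in A, (g x * Real.log (g x) - h x * Real.log (h x))| ≤
      -(ε * Real.log ε) + ε * Real.log (volume A).toReal := by
  have : IsFiniteMeasure (volume.restrict A) := isFiniteMeasure_restrict.2 hAfin
  have key := abs_integral_le_negMulLog_integral (u := fun x ↦ |g x - h x|) (hgint.sub hhint).abs
    (ae_of_all _ fun _ ↦ abs_nonneg _) (hε ▸ hεpos)
    (ae_restrict_of_forall_mem hA fun x hx ↦ abs_mul_log_sub_mul_log_le (hgb x hx) (hhb x hx))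
  rwa [← hε, measureReal_restrict_apply_univ, measureReal_def, negMulLog, neg_mul] at key

/-- if `A ⊆ ℝ^d` has finite Lebesgue measure, `g h : A → [0, e⁻¹]` are
integrable, and `ε = ∫_A |g − h| > 0`, then
`|∫_A (g log g − h log h)| ≤ −ε log ε + ε log m(A)`. -/
theorem stmt_8 (d : ℕ) (hd : 1 ≤ d) (A : Set (EuclideanSpace ℝ (Fin d)))
    (hA : MeasurableSet A) (hAfin : volume A ≠ ⊤)
    (g h : EuclideanSpace ℝ (Fin d) → ℝ)
    (hgint : IntegrableOn g A volume) (hhint : IntegrableOn h A volume)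
    (hgb : ∀ x ∈ A, g x ∈ Set.Icc (0 : ℝ) (Real.exp (-1)))
    (hhb : ∀ x ∈ A, h x ∈ Set.Icc (0 : ℝ) (Real.exp (-1)))
    (ε : ℝ) (hε : ε = ∫ x in A, |g x - h x|) (hεpos : 0 < ε) :
    |∫ x in A, (g x * Real.log (g x) - h x * Real.log (h x))| ≤
      -(ε * Real.log ε) + ε * Real.log (volume A).toReal :=
  stmt_8_general d A hA hAfin g h hgint hhint hgb hhb ε hε hεpos
end
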